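/- The nonempty unbordered factors of the infinite Fibonacci word f are exactly of the lengths F_n for n ≥ 2; for each n ≥ 2 there are exactly two unbordered factors of length F_n, and for each n ≥ 3 these two unbordered factors are reversals of each other. -/

import Mathlib

/-- The Fibonacci morphism φ: 0 ↦ 01, 1 ↦ 0. -/
def fibPhi (w : List ℕ) : List ℕ := (w.map (fun c => if c = 0 then [0, 1] else [0])).flatten

/-- The infinite Fibonacci word f = 0100101001001⋯, the fixed point of φ starting with 0. -/
def fibWord (i : ℕ) : ℕ := ((fibPhi^[i + 2]) [0]).getD i 0

/-- A finite word is a factor of the infinite Fibonacci word. -/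
def IsFibFactor (x : List ℕ) : Prop :=
  ∃ i : ℕ, x = (List.range x.length).map (fun t => fibWord (i + t))

/-- x has a border: a nonempty word that is both a proper prefix and a
proper suffix of x. -/
def HasBorder (x : List ℕ) : Prop :=
  ∃ y : List ℕ, y ≠ [] ∧ y.length < x.length ∧ y <+: x ∧ y <:+ x

/-!
An unbordered factor `x` of `f` of length at least 2 begins and ends with different letters; by
symmetry (the factors of `f` are closed under reversal) say `x = 0 ⋯ 1`. Such an `x` is cut at
block boundaries of `φ`, so `x = φ y` for a shorter factor `y`; borders lift along `φ`, so `y` is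
unbordered, and it ends with `0`. Thus either `y = 0` and `x = 01`, or `y = 1 ⋯ 0` and induction
applies to `yᴿ`. Hence `x` is one of the words `u₀ = 01`, `u_{k+1} = φ(u_kᴿ)`, whose lengths
satisfy the Fibonacci recursion. Conversely `u_k = 0 p 1` with `p` a palindrome, and such a word is
unbordered.
-/

@[simp] theorem fibPhi_nil : fibPhi [] = [] := rfl

@[simp] theorem fibPhi_cons (c : ℕ) (w : List ℕ) :
    fibPhi (c :: w) = (if c = 0 then [0, 1] else [0]) ++ fibPhi w := by
  simp [fibPhi]

@[simp] theorem fibPhi_append (v w : List ℕ) : fibPhi (v ++ w) = fibPhi v ++ fibPhi w := by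
  simp [fibPhi]

theorem fibPhi_ne_nil {w : List ℕ} (hw : w ≠ []) : fibPhi w ≠ [] := by
  obtain ⟨c, w, rfl⟩ := List.exists_cons_of_ne_nil hw
  rw [fibPhi_cons]
  split_ifs <;> simp

theorem length_fibPhi (w : List ℕ) : (fibPhi w).length = w.length + w.count 0 := by
  induction w with
  | nil => rfl
  | cons c w ih => by_cases hc : c = 0 <;> simp [hc, ih] <;> omega

theorem count_zero_fibPhi (w : List ℕ) : (fibPhi w).count 0 = w.length := by
  induction w with
  | nil => rfl
  | cons c w ih => by_cases hc : c = 0 <;> simp [hc, ih]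

theorem mem_fibPhi {c : ℕ} {w : List ℕ} (h : c ∈ fibPhi w) : c = 0 ∨ c = 1 := by
  simp only [fibPhi, List.mem_flatten, List.mem_map] at h
  obtain ⟨_, ⟨b, -, rfl⟩, hc⟩ := h
  split_ifs at hc <;> simp_all

theorem reverse_fibPhi_append_zero (w : List ℕ) :
    (fibPhi w ++ [0]).reverse = fibPhi w.reverse ++ [0] := by
  induction w with
  | nil => rfl
  | cons c w ih => by_cases hc : c = 0 <;> simp_all

theorem List.IsPrefix.fibPhi {v w : List ℕ} (h : v <+: w) :
    _root_.fibPhi v <+: _root_.fibPhi w := by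
  obtain ⟨t, rfl⟩ := h
  exact ⟨_, (fibPhi_append v t).symm⟩

theorem List.IsInfix.fibPhi {v w : List ℕ} (h : v <:+: w) :
    _root_.fibPhi v <:+: _root_.fibPhi w := by
  obtain ⟨l, r, rfl⟩ := h
  exact ⟨_root_.fibPhi l, _root_.fibPhi r, by simp⟩

theorem getLast?_eq_zero_of_getLast?_fibPhi {y : List ℕ} (h : (fibPhi y).getLast? = some 1) :
    y.getLast? = some 0 := by
  rcases List.eq_nil_or_concat' y with rfl | ⟨y, c, rfl⟩
  · simp at h
  · by_cases hc : c = 0 <;> simp_all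

-- Inside a block `φ c`, `φ w` can only be cut between the `0` and the `1` of `01`.
theorem exists_of_fibPhi_eq_append {w l s : List ℕ} (h : fibPhi w = l ++ s)
    (hcut : l.getLast? = some 0 → s.head? ≠ some 1) :
    ∃ w₁ w₂, w = w₁ ++ w₂ ∧ fibPhi w₁ = l ∧ fibPhi w₂ = s := by
  induction w generalizing l with
  | nil =>
    obtain ⟨rfl, rfl⟩ := List.append_eq_nil_iff.mp h.symm
    exact ⟨[], [], rfl, rfl, rfl⟩
  | cons c w ih =>
    rcases l with _ | ⟨a, l⟩
    · exact ⟨[], c :: w, rfl, rfl, h⟩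
    have hcut' : l.getLast? = some 0 → s.head? ≠ some 1 := fun h0 =>
      hcut (by cases l <;> simp_all)
    by_cases hc : c = 0
    · simp only [fibPhi_cons, hc, ↓reduceIte, List.cons_append, List.nil_append,
        List.cons.injEq] at h
      obtain ⟨rfl, h⟩ := h
      rcases l with _ | ⟨b, l⟩
      · exact absurd (by rw [← List.nil_append s, ← h]; rfl) (hcut rfl)
      simp only [List.cons_append, List.cons.injEq] at h
      obtain ⟨rfl, h⟩ := h
      obtain ⟨w₁, w₂, rfl, rfl, rfl⟩ := ih h fun h0 => hcut' (by cases l <;> simp_all)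
      exact ⟨c :: w₁, w₂, rfl, by simp [hc], rfl⟩
    · simp only [fibPhi_cons, hc, ↓reduceIte, List.cons_append, List.nil_append,
        List.cons.injEq] at h
      obtain ⟨rfl, h⟩ := h
      obtain ⟨w₁, w₂, rfl, rfl, rfl⟩ := ih h hcut'
      exact ⟨c :: w₁, w₂, rfl, by simp [hc], rfl⟩

theorem exists_infix_fibPhi_eq {x w : List ℕ} (hx : x <:+: fibPhi w)
    (h0 : x.head? = some 0) (h1 : x.getLast? = some 1) :
    ∃ y, y <:+: w ∧ fibPhi y = x := by
  obtain ⟨l, r, hw⟩ := hx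
  obtain ⟨w₁, w₂, rfl, -, hw₂⟩ := exists_of_fibPhi_eq_append (l := l) (s := x ++ r)
    (by rw [← hw, List.append_assoc]) fun _ => by cases x <;> simp_all
  obtain ⟨y, w₃, rfl, hy, -⟩ := exists_of_fibPhi_eq_append hw₂ (by simp [h1])
  exact ⟨y, ⟨w₁, w₃, by simp⟩, hy⟩

def finFibWord (n : ℕ) : List ℕ := fibPhi^[n] [0]

theorem finFibWord_succ (n : ℕ) : finFibWord (n + 1) = fibPhi (finFibWord n) :=
  Function.iterate_succ_apply' _ _ _

theorem finFibWord_prefix_succ (n : ℕ) : finFibWord n <+: finFibWord (n + 1) := by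
  induction n with
  | zero => exact ⟨[1], rfl⟩
  | succ n ih => rw [finFibWord_succ, finFibWord_succ (n + 1)]; exact ih.fibPhi

theorem finFibWord_prefix_of_le {m n : ℕ} (h : m ≤ n) : finFibWord m <+: finFibWord n := by
  induction n, h using Nat.le_induction with
  | base => exact List.prefix_refl _
  | succ n _ ih => exact ih.trans (finFibWord_prefix_succ n)

theorem mem_finFibWord {c n : ℕ} (h : c ∈ finFibWord n) : c = 0 ∨ c = 1 := by
  cases n with
  | zero => exact .inl (List.mem_singleton.mp h)
  | succ n => rw [finFibWord_succ] at h; exact mem_fibPhi h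

theorem lt_length_finFibWord (n : ℕ) : n < (finFibWord n).length := by
  induction n with
  | zero => simp [finFibWord]
  | succ n ih =>
    have h0 : 0 ∈ finFibWord n :=
      (finFibWord_prefix_of_le n.zero_le).subset (List.mem_singleton_self 0)
    rw [finFibWord_succ, length_fibPhi]
    have := List.count_pos_iff.mpr h0
    omega

theorem fibWord_eq_getElem {i k : ℕ} (h : i < (finFibWord k).length) :
    fibWord i = (finFibWord k)[i] := by
  have hi : i < (finFibWord (i + 2)).length := by have := lt_length_finFibWord (i + 2); omega
  have hk := finFibWord_prefix_of_le (le_max_left k (i + 2))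
  have hi2 := finFibWord_prefix_of_le (le_max_right k (i + 2))
  change (finFibWord (i + 2)).getD i 0 = _
  rw [List.getD_eq_getElem _ _ hi, hi2.getElem hi, hk.getElem h]

theorem map_range_fibWord_eq {i n k : ℕ} (h : i + n ≤ (finFibWord k).length) :
    (List.range n).map (fun t => fibWord (i + t)) = ((finFibWord k).drop i).take n := by
  apply List.ext_getElem
  · simp only [List.length_map, List.length_range, List.length_take, List.length_drop]
    omega
  · intro t h1 h2
    simp only [List.length_map, List.length_range] at h1
    simp only [List.getElem_map, List.getElem_range, List.getElem_take, List.getElem_drop]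
    exact fibWord_eq_getElem (by omega)

theorem isFibFactor_iff {x : List ℕ} : IsFibFactor x ↔ ∃ k, x <:+: finFibWord k := by
  constructor
  · rintro ⟨i, hx⟩
    have h := lt_length_finFibWord (i + x.length)
    rw [hx, map_range_fibWord_eq h.le]
    exact ⟨_, (List.take_prefix _ _).isInfix.trans (List.drop_suffix _ _).isInfix⟩
  · rintro ⟨k, l, r, hk⟩
    refine ⟨l.length, ?_⟩
    rw [map_range_fibWord_eq (k := k) (by simp [← hk]), ← hk, List.append_assoc, List.drop_left,
      List.take_left]

def fibPal : ℕ → List ℕ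
  | 0 => []
  | n + 1 => fibPhi (fibPal n) ++ [0]

theorem fibPal_palindrome (n : ℕ) : (fibPal n).Palindrome := by
  induction n with
  | zero => exact .nil
  | succ n ih => exact .of_reverse_eq (by rw [fibPal, reverse_fibPhi_append_zero, ih.reverse_eq])

theorem le_length_fibPal (n : ℕ) : n ≤ (fibPal n).length := by
  induction n with
  | zero => exact le_rfl
  | succ n ih =>
    simp only [fibPal, List.length_append, length_fibPhi, List.length_singleton]
    omega

theorem finFibWord_succ_eq_fibPal_append (n : ℕ) :
    finFibWord (n + 1) = fibPal n ++ [0, 1] ∨ finFibWord (n + 1) = fibPal n ++ [1, 0] := by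
  induction n with
  | zero => exact .inl rfl
  | succ n ih =>
    rw [finFibWord_succ]
    rcases ih with h | h <;> rw [h] <;> simp [fibPal]

theorem fibPal_prefix_finFibWord (n : ℕ) : fibPal n <+: finFibWord (n + 1) := by
  rcases finFibWord_succ_eq_fibPal_append n with h | h <;> exact ⟨_, h.symm⟩

namespace IsFibFactor

variable {x : List ℕ}

theorem zero_or_one_of_mem (hx : IsFibFactor x) {c : ℕ} (hc : c ∈ x) : c = 0 ∨ c = 1 := by
  obtain ⟨k, hk⟩ := isFibFactor_iff.mp hx
  exact mem_finFibWord (hk.subset hc)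

theorem reverse (hx : IsFibFactor x) : IsFibFactor x.reverse := by
  obtain ⟨k, hk⟩ := isFibFactor_iff.mp hx
  -- `x` lies in the palindromic prefix `fibPal m`, hence so does its reversal
  set m := (finFibWord k).length
  have hkm : finFibWord k <+: fibPal m :=
    List.prefix_of_prefix_length_le
      (finFibWord_prefix_of_le (lt_length_finFibWord k).le |>.trans (finFibWord_prefix_succ m))
      (fibPal_prefix_finFibWord m) (le_length_fibPal m)
  have hxm : x.reverse <:+: fibPal m := by
    rw [← (fibPal_palindrome m).reverse_eq]
    exact List.reverse_infix.mpr (hk.trans hkm.isInfix)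
  exact isFibFactor_iff.mpr ⟨m + 1, hxm.trans (fibPal_prefix_finFibWord m).isInfix⟩

theorem fibPhi (hx : IsFibFactor x) : IsFibFactor (_root_.fibPhi x) := by
  obtain ⟨k, hk⟩ := isFibFactor_iff.mp hx
  exact isFibFactor_iff.mpr ⟨k + 1, finFibWord_succ k ▸ hk.fibPhi⟩

theorem exists_fibPhi_eq (hx : IsFibFactor x) (h0 : x.head? = some 0)
    (h1 : x.getLast? = some 1) : ∃ y, IsFibFactor y ∧ _root_.fibPhi y = x := by
  obtain ⟨k, hk⟩ := isFibFactor_iff.mp hx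
  obtain ⟨y, hy, rfl⟩ := exists_infix_fibPhi_eq
    (finFibWord_succ k ▸ hk.trans (finFibWord_prefix_succ k).isInfix) h0 h1
  exact ⟨y, isFibFactor_iff.mpr ⟨k, hy⟩, rfl⟩

end IsFibFactor

namespace HasBorder

variable {x : List ℕ}

theorem reverse (h : HasBorder x) : HasBorder x.reverse := by
  obtain ⟨y, hne, hlt, hp, hs⟩ := h
  exact ⟨y.reverse, by simpa, by simpa, List.reverse_prefix.mpr hs, List.reverse_suffix.mpr hp⟩

theorem fibPhi (h : HasBorder x) : HasBorder (_root_.fibPhi x) := by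
  obtain ⟨y, hne, hlt, ⟨t, rfl⟩, ⟨s, hs⟩⟩ := h
  have ht : t ≠ [] := by rintro rfl; simp at hlt
  refine ⟨_root_.fibPhi y, fibPhi_ne_nil hne, ?_, ⟨_root_.fibPhi t, (fibPhi_append y t).symm⟩,
    ⟨_root_.fibPhi s, by rw [← fibPhi_append, hs]⟩⟩
  have := List.length_pos_iff.mpr (fibPhi_ne_nil ht)
  simp only [fibPhi_append, List.length_append]
  omega

end HasBorder

@[simp] theorem hasBorder_reverse_iff {x : List ℕ} : HasBorder x.reverse ↔ HasBorder x :=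
  ⟨fun h => by simpa using h.reverse, HasBorder.reverse⟩

theorem hasBorder_of_head?_eq_getLast? {x : List ℕ} (h2 : 2 ≤ x.length)
    (h : x.head? = x.getLast?) : HasBorder x := by
  obtain ⟨a, t, rfl⟩ := List.exists_cons_of_length_pos (by omega : 0 < x.length)
  obtain ⟨s, hs⟩ := List.getLast?_eq_some_iff.mp h.symm
  exact ⟨[a], by simp, by simp at h2 ⊢; omega, ⟨t, rfl⟩, ⟨s, hs.symm⟩⟩

theorem not_hasBorder_cons_append_singleton {p : List ℕ} (hp : p.Palindrome) {a b : ℕ}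
    (hab : a ≠ b) : ¬HasBorder (a :: (p ++ [b])) := by
  rintro ⟨_ | ⟨c, v⟩, hne, hlt, hpre, hsuf⟩
  · exact hne rfl
  obtain ⟨rfl, hv⟩ := List.cons_prefix_cons.mp hpre
  have hrev : v.reverse ++ [c] <+: b :: (p ++ [c]) := by
    simpa [hp.reverse_eq] using List.reverse_prefix.mpr hsuf
  rcases List.eq_nil_or_concat' v with rfl | ⟨q, d, rfl⟩
  · exact hab (by simpa using hrev)
  -- a border `a q b` would make both `q b` and `qᴿ a` prefixes of `p`
  obtain ⟨rfl, hrev'⟩ : d = b ∧ q.reverse ++ [c] <+: p ++ [c] := by simpa using hrev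
  have hq : q.length < p.length := by simp at hlt; omega
  have h1 : q ++ [d] <+: p :=
    List.prefix_of_prefix_length_le hv (List.prefix_append p [d]) (by simp; omega)
  have h2 : q.reverse ++ [c] <+: p :=
    List.prefix_of_prefix_length_le hrev' (List.prefix_append p [c]) (by simp; omega)
  have := congrArg List.getLast?
    ((List.prefix_of_prefix_length_le h1 h2 (by simp)).eq_of_length (by simp))
  exact hab (by simpa using this.symm)

def fibUnbordered : ℕ → List ℕ
  | 0 => [0, 1]
  | k + 1 => fibPhi (fibUnbordered k).reverse

theorem exists_palindrome_fibUnbordered_eq (k : ℕ) :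
    ∃ p : List ℕ, p.Palindrome ∧ fibUnbordered k = 0 :: (p ++ [1]) := by
  induction k with
  | zero => exact ⟨[], .nil, rfl⟩
  | succ k ih =>
    obtain ⟨p, hp, hk⟩ := ih
    refine ⟨fibPhi p ++ [0], .of_reverse_eq ?_, ?_⟩
    · rw [reverse_fibPhi_append_zero, hp.reverse_eq]
    simp [fibUnbordered, hk, hp.reverse_eq]

theorem not_hasBorder_fibUnbordered (k : ℕ) : ¬HasBorder (fibUnbordered k) := by
  obtain ⟨p, hp, hk⟩ := exists_palindrome_fibUnbordered_eq k
  exact hk ▸ not_hasBorder_cons_append_singleton hp zero_ne_one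

theorem fibUnbordered_ne_reverse (k : ℕ) : fibUnbordered k ≠ (fibUnbordered k).reverse := by
  obtain ⟨p, -, hk⟩ := exists_palindrome_fibUnbordered_eq k
  intro h
  simpa [hk] using congrArg List.head? h

theorem length_fibUnbordered (k : ℕ) : (fibUnbordered k).length = Nat.fib (k + 3) := by
  induction k using Nat.twoStepInduction with
  | zero => rfl
  | one => rfl
  | more k ih₀ ih₁ =>
    have hcount : (fibUnbordered (k + 1)).count 0 = (fibUnbordered k).length :=
      (count_zero_fibPhi _).trans List.length_reverse
    rw [fibUnbordered, length_fibPhi, List.length_reverse, List.count_reverse, hcount, ih₀, ih₁,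
      Nat.fib_add_two (n := k + 3)]
    ring_nf

theorem isFibFactor_fibUnbordered (k : ℕ) : IsFibFactor (fibUnbordered k) := by
  induction k with
  | zero => exact isFibFactor_iff.mpr ⟨1, List.infix_refl _⟩
  | succ k ih => exact ih.reverse.fibPhi

namespace IsFibFactor

variable {x : List ℕ}

theorem head?_getLast?_of_not_hasBorder (hx : IsFibFactor x) (hub : ¬HasBorder x)
    (h2 : 2 ≤ x.length) :
    x.head? = some 0 ∧ x.getLast? = some 1 ∨ x.head? = some 1 ∧ x.getLast? = some 0 := by
  have hne : x ≠ [] := by rintro rfl; simp at h2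
  have hdiff : x.head? ≠ x.getLast? := fun h => hub (hasBorder_of_head?_eq_getLast? h2 h)
  rw [List.head?_eq_some_head hne, List.getLast?_eq_some_getLast hne] at hdiff ⊢
  rcases hx.zero_or_one_of_mem (List.head_mem hne) with h | h <;>
    rcases hx.zero_or_one_of_mem (List.getLast_mem hne) with h' | h' <;> simp_all

theorem exists_eq_fibUnbordered (hx : IsFibFactor x) (hub : ¬HasBorder x)
    (h0 : x.head? = some 0) (h1 : x.getLast? = some 1) : ∃ k, x = fibUnbordered k := by
  induction hn : x.length using Nat.strong_induction_on generalizing x with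
  | _ n ih =>
  obtain ⟨y, hy, rfl⟩ := hx.exists_fibPhi_eq h0 h1
  have hyub : ¬HasBorder y := fun h => hub h.fibPhi
  have hy0 : y.getLast? = some 0 := getLast?_eq_zero_of_getLast?_fibPhi h1
  rcases Nat.lt_or_ge y.length 2 with hy2 | hy2
  · obtain ⟨c, rfl⟩ : ∃ c, y = [c] := List.length_eq_one_iff.mp
      (by have := List.length_pos_of_mem (List.mem_of_getLast? hy0); omega)
    obtain rfl : c = 0 := by simpa using hy0
    exact ⟨0, rfl⟩
  · have hy1 : y.head? = some 1 := by
      rcases hy.head?_getLast?_of_not_hasBorder hyub hy2 with h | h <;> simp_all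
    have hlt : y.length < n := by
      have := List.count_pos_iff.mpr (List.mem_of_getLast? hy0)
      rw [← hn, length_fibPhi]
      omega
    obtain ⟨k, hk⟩ := ih _ hlt hy.reverse (by simpa) (by simpa) (by simpa) y.length_reverse
    exact ⟨k + 1, by rw [fibUnbordered, ← hk, List.reverse_reverse]⟩

theorem exists_eq_fibUnbordered_or_reverse (hx : IsFibFactor x) (hub : ¬HasBorder x)
    (h2 : 2 ≤ x.length) : ∃ k, x = fibUnbordered k ∨ x = (fibUnbordered k).reverse := by
  rcases hx.head?_getLast?_of_not_hasBorder hub h2 with ⟨h0, h1⟩ | ⟨h1, h0⟩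
  · obtain ⟨k, hk⟩ := hx.exists_eq_fibUnbordered hub h0 h1
    exact ⟨k, .inl hk⟩
  · obtain ⟨k, hk⟩ := hx.reverse.exists_eq_fibUnbordered (by simpa) (by simpa) (by simpa)
    exact ⟨k, .inr (by rw [← hk, List.reverse_reverse])⟩

end IsFibFactor

theorem setOf_unbordered_length_fib_add_three (k : ℕ) :
    {x : List ℕ | IsFibFactor x ∧ x.length = Nat.fib (k + 3) ∧ ¬HasBorder x} =
      {fibUnbordered k, (fibUnbordered k).reverse} := by
  ext x
  simp only [Set.mem_ofPred_eq, Set.mem_insert_iff, Set.mem_singleton_iff]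
  constructor
  · rintro ⟨hx, hlen, hub⟩
    have h2 : 2 ≤ x.length := hlen ▸ Nat.fib_mono (by omega : 3 ≤ k + 3)
    have hfib : ∀ m, Nat.fib (m + 3) = Nat.fib (k + 3) → m = k := fun m h => by
      have := Nat.fib_add_two_strictMono.injective (a₁ := m + 1) (a₂ := k + 1) h
      omega
    obtain ⟨m, rfl | rfl⟩ := hx.exists_eq_fibUnbordered_or_reverse hub h2 <;>
      obtain rfl := hfib m (by simpa [length_fibUnbordered] using hlen) <;> simp
  · rintro (rfl | rfl) <;>
      simp [isFibFactor_fibUnbordered, (isFibFactor_fibUnbordered k).reverse,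
        length_fibUnbordered, not_hasBorder_fibUnbordered]

theorem setOf_unbordered_length_one :
    {x : List ℕ | IsFibFactor x ∧ x.length = 1 ∧ ¬HasBorder x} = {[0], [1]} := by
  ext x
  simp only [Set.mem_ofPred_eq, Set.mem_insert_iff, Set.mem_singleton_iff]
  constructor
  · rintro ⟨hx, hlen, -⟩
    obtain ⟨c, rfl⟩ := List.length_eq_one_iff.mp hlen
    simpa using hx.zero_or_one_of_mem (List.mem_singleton_self c)
  · have hub (c : ℕ) : ¬HasBorder [c] := fun ⟨_, hne, hlt, _⟩ => hne (by simpa using hlt)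
    rintro (rfl | rfl)
    · exact ⟨isFibFactor_iff.mpr ⟨0, List.infix_refl _⟩, rfl, hub 0⟩
    · exact ⟨isFibFactor_iff.mpr ⟨1, [0], [], rfl⟩, rfl, hub 1⟩

/-- The nonempty unbordered factors of the Fibonacci word have lengths exactly
the F_n for n ≥ 2; there are exactly two of each such length, and for n ≥ 3
the two unbordered factors of length F_n are reversals of each other. -/
theorem fibWord_unbordered_factors :
    (∀ x : List ℕ, IsFibFactor x → x ≠ [] → ¬ HasBorder x →
      ∃ n : ℕ, 2 ≤ n ∧ x.length = Nat.fib n) ∧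
    (∀ n : ℕ, 2 ≤ n →
      {x : List ℕ | IsFibFactor x ∧ x.length = Nat.fib n ∧ ¬ HasBorder x}.ncard = 2) ∧
    (∀ n : ℕ, 3 ≤ n → ∀ x y : List ℕ,
      IsFibFactor x → x.length = Nat.fib n → ¬ HasBorder x →
      IsFibFactor y → y.length = Nat.fib n → ¬ HasBorder y →
      x ≠ y → y = x.reverse) := by
  refine ⟨fun x hx hne hub => ?_, fun n hn => ?_, fun n hn x y hx hxl hxu hy hyl hyu hxy => ?_⟩
  · rcases Nat.lt_or_ge x.length 2 with h1 | h2
    · have := List.length_pos_iff.mpr hne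
      exact ⟨2, le_rfl, by rw [Nat.fib_two]; omega⟩
    · obtain ⟨k, rfl | rfl⟩ := hx.exists_eq_fibUnbordered_or_reverse hub h2 <;>
        exact ⟨k + 3, by omega, by simp [length_fibUnbordered]⟩
  · obtain rfl | ⟨k, rfl⟩ : n = 2 ∨ ∃ k, n = k + 3 :=
      (eq_or_lt_of_le hn).imp Eq.symm fun h => ⟨n - 3, by omega⟩
    · rw [Nat.fib_two, setOf_unbordered_length_one]
      exact Set.ncard_pair (by simp)
    · rw [setOf_unbordered_length_fib_add_three]
      exact Set.ncard_pair (fibUnbordered_ne_reverse k)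
  · obtain ⟨k, rfl⟩ : ∃ k, n = k + 3 := ⟨n - 3, by omega⟩
    have hx' : x ∈ _ := (setOf_unbordered_length_fib_add_three k).subset ⟨hx, hxl, hxu⟩
    have hy' : y ∈ _ := (setOf_unbordered_length_fib_add_three k).subset ⟨hy, hyl, hyu⟩
    rcases hx' with rfl | rfl <;> rcases hy' with rfl | rfl <;> simp_all
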